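/- Let f : Ω → ℝ be C³ on an open set Ω ⊆ ℝ². The Gaussian curvature of the graph surface {(x, y, f(x,y))} ⊂ ℝ³ is K = (∂ₓ²f · ∂ᵧ²f − (∂ₓ∂ᵧf)²) / (1 + (∂ₓf)² + (∂ᵧf)²)². Equivalently, setting ψ(x,y,z) = z − f(x,y), F = |∇ψ| and V = Δψ (the 3-dimensional Laplacian), one has 2K = ∇·(V ∇ψ / F²) − Δ log F at every point of the graph. -/

import Mathlib

open Real

/-- Partial derivative along the `i`-th coordinate direction in `Fin d → ℝ`. -/
noncomputable def pd {d : ℕ} (i : Fin d) (f : (Fin d → ℝ) → ℝ) (x : Fin d → ℝ) : ℝ :=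
  fderiv ℝ f x (Pi.single i 1)

/-- The flat Laplacian on `Fin d → ℝ`. -/
noncomputable def lap {d : ℕ} (f : (Fin d → ℝ) → ℝ) (x : Fin d → ℝ) : ℝ :=
  ∑ i, pd i (pd i f) x

/-! `∇ψ = (-∇f, 1)` depends on the first two coordinates only, so `|∇ψ|² = 1 + |∇f|² =: W`,
`Δψ = -Δf`, and every field on the right-hand side is pulled back from the plane: the right-hand
side is the planar expression `div (Δf ∇f / W) - Δ log √W`. With `H = Hess f` we have
`∇ log √W = H ∇f / W`, and in the plane `Δf ∇f - H ∇f = adj H ∇f`, so this is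
`div (adj H ∇f / W)`. The adjugate of a Hessian is divergence free, hence the result is
`2 det H / W - ⟨adj H ∇f, 2 H ∇f⟩ / W² = 2 det H (1 / W - |∇f|² / W²) = 2 det H / W² = 2K`. -/

open Filter Topology

section PartialDerivative

variable {d : ℕ} {i : Fin d} {u v : (Fin d → ℝ) → ℝ} {x : Fin d → ℝ}

lemma pd_eventuallyEq (h : u =ᶠ[𝓝 x] v) : pd i u =ᶠ[𝓝 x] pd i v :=
  h.fderiv.mono fun y hy => by rw [pd, pd, hy]

lemma pd_congr (h : u =ᶠ[𝓝 x] v) : pd i u x = pd i v x :=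
  (pd_eventuallyEq h).eq_of_nhds

lemma lap_congr (h : u =ᶠ[𝓝 x] v) : lap u x = lap v x :=
  Finset.sum_congr rfl fun _ _ => pd_congr (pd_eventuallyEq h)

lemma pd_const (c : ℝ) : pd i (fun _ => c) x = 0 := by
  simp [pd]

lemma pd_apply (j : Fin d) : pd i (fun y => y j) x = Pi.single (M := fun _ => ℝ) i 1 j := by
  rw [pd, show (fun y : Fin d → ℝ => y j) = ContinuousLinearMap.proj (R := ℝ) j from rfl,
    ContinuousLinearMap.fderiv]
  rfl

lemma pd_add (hu : DifferentiableAt ℝ u x) (hv : DifferentiableAt ℝ v x) :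
    pd i (fun y => u y + v y) x = pd i u x + pd i v x := by
  rw [pd, fderiv_fun_add hu hv]; rfl

lemma pd_sub (hu : DifferentiableAt ℝ u x) (hv : DifferentiableAt ℝ v x) :
    pd i (fun y => u y - v y) x = pd i u x - pd i v x := by
  rw [pd, fderiv_fun_sub hu hv]; rfl

lemma pd_neg : pd i (fun y => -u y) x = -pd i u x := by
  rw [pd, fderiv_fun_neg]; rfl

lemma pd_sum {ι : Type*} (s : Finset ι) {w : ι → (Fin d → ℝ) → ℝ}
    (hw : ∀ k ∈ s, DifferentiableAt ℝ (w k) x) :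
    pd i (fun y => ∑ k ∈ s, w k y) x = ∑ k ∈ s, pd i (w k) x := by
  simp [pd, fderiv_fun_sum hw]

lemma pd_mul (hu : DifferentiableAt ℝ u x) (hv : DifferentiableAt ℝ v x) :
    pd i (fun y => u y * v y) x = pd i u x * v x + u x * pd i v x := by
  rw [pd, fderiv_fun_mul hu hv]; simp [pd, smul_eq_mul]; ring

lemma pd_comp {h : ℝ → ℝ} {h' : ℝ} (hh : HasDerivAt h h' (u x)) (hu : DifferentiableAt ℝ u x) :
    pd i (fun y => h (u y)) x = h' * pd i u x := by
  rw [pd, show (fun y => h (u y)) = h ∘ u from rfl, (hh.comp_hasFDerivAt x hu.hasFDerivAt).fderiv]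
  simp [pd]

lemma pd_pow (n : ℕ) (hu : DifferentiableAt ℝ u x) :
    pd i (fun y => u y ^ n) x = n * u x ^ (n - 1) * pd i u x :=
  pd_comp (hasDerivAt_pow n _) hu

lemma pd_div (hu : DifferentiableAt ℝ u x) (hv : DifferentiableAt ℝ v x) (hx : v x ≠ 0) :
    pd i (fun y => u y / v y) x = (pd i u x * v x - u x * pd i v x) / v x ^ 2 := by
  have hinv : pd i (fun y => (v y)⁻¹) x = -(v x ^ 2)⁻¹ * pd i v x := pd_comp (hasDerivAt_inv hx) hv
  simp only [div_eq_mul_inv]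
  rw [pd_mul (v := fun y => (v y)⁻¹) hu (hv.inv hx), hinv]
  field_simp
  ring

lemma Real.hasDerivAt_log_sqrt {t : ℝ} (ht : 0 < t) :
    HasDerivAt (fun s => Real.log √s) (1 / (2 * t)) t := by
  convert (Real.hasDerivAt_sqrt ht.ne').log (Real.sqrt_ne_zero'.2 ht) using 1
  rw [div_div, mul_assoc, Real.mul_self_sqrt ht.le]

lemma pd_log_sqrt (hu : DifferentiableAt ℝ u x) (hx : 0 < u x) :
    pd i (fun y => Real.log √(u y)) x = pd i u x / (2 * u x) := by
  rw [pd_comp (Real.hasDerivAt_log_sqrt hx) hu]; ring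

lemma ContDiffAt.pd {n m : WithTop ℕ∞} (h : ContDiffAt ℝ n u x) (hmn : m + 1 ≤ n) :
    ContDiffAt ℝ m (pd i u) x :=
  (h.fderiv_right hmn).clm_apply contDiffAt_const

lemma ContDiffAt.lap {n m : WithTop ℕ∞} (h : ContDiffAt ℝ n u x) (hmn : m + 2 ≤ n) :
    ContDiffAt ℝ m (lap u) x :=
  ContDiffAt.sum fun _ _ => (h.pd (m := m + 1) (by rwa [add_assoc, one_add_one_eq_two])).pd le_rfl

lemma pd_pd_eq_fderiv_fderiv (i j : Fin d) (hu : ContDiffAt ℝ 2 u x) :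
    pd i (pd j u) x = fderiv ℝ (fderiv ℝ u) x (Pi.single i 1) (Pi.single j 1) := by
  have hdu : DifferentiableAt ℝ (fderiv ℝ u) x :=
    (hu.fderiv_right (m := 1) le_rfl).differentiableAt one_ne_zero
  rw [pd, show pd j u = fun y => fderiv ℝ u y (Pi.single j 1) from rfl,
    fderiv_clm_apply hdu (differentiableAt_const _)]
  simp

lemma pd_comm (i j : Fin d) (hu : ContDiffAt ℝ 2 u x) : pd i (pd j u) x = pd j (pd i u) x := by
  rw [pd_pd_eq_fderiv_fderiv i j hu, pd_pd_eq_fderiv_fderiv j i hu]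
  exact hu.isSymmSndFDerivAt (by simp) _ _

lemma pd_comm_eventuallyEq (i j : Fin d) (hu : ContDiffAt ℝ 2 u x) :
    pd i (pd j u) =ᶠ[𝓝 x] pd j (pd i u) :=
  (hu.eventually (by simp)).mono fun _ hy => pd_comm i j hy

end PartialDerivative

section LiftAlongInit

variable {d : ℕ}

def Fin.initCLM (d : ℕ) : (Fin (d + 1) → ℝ) →L[ℝ] (Fin d → ℝ) :=
  ContinuousLinearMap.pi fun i => ContinuousLinearMap.proj i.castSucc

lemma Fin.init_single_castSucc (i : Fin d) :
    Fin.init (Pi.single (M := fun _ => ℝ) i.castSucc 1) = Pi.single i 1 := by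
  funext j; simp [Fin.init, Pi.single_apply, Fin.castSucc_inj]

lemma Fin.init_single_last : Fin.init (Pi.single (M := fun _ => ℝ) (Fin.last d) 1) = 0 := by
  funext j; simp [Fin.init, Fin.castSucc_ne_last]

variable {g : (Fin d → ℝ) → ℝ} {y : Fin (d + 1) → ℝ}

lemma DifferentiableAt.comp_init (hg : DifferentiableAt ℝ g (Fin.init y)) :
    DifferentiableAt ℝ (fun z => g (Fin.init z)) y :=
  hg.comp (f := Fin.initCLM d) y (Fin.initCLM d).differentiableAt

lemma pd_comp_init (i : Fin (d + 1)) (hg : DifferentiableAt ℝ g (Fin.init y)) :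
    pd i (fun z => g (Fin.init z)) y =
      fderiv ℝ g (Fin.init y) (Fin.init (Pi.single i 1 : Fin (d + 1) → ℝ)) := by
  rw [pd, show (fun z => g (Fin.init z)) = g ∘ Fin.initCLM d from rfl,
    fderiv_comp (f := Fin.initCLM d) y hg (Fin.initCLM d).differentiableAt,
    ContinuousLinearMap.fderiv]
  rfl

lemma pd_castSucc_comp_init (i : Fin d) (hg : DifferentiableAt ℝ g (Fin.init y)) :
    pd i.castSucc (fun z => g (Fin.init z)) y = pd i g (Fin.init y) := by
  rw [pd_comp_init _ hg, Fin.init_single_castSucc, pd]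

lemma pd_last_comp_init (hg : DifferentiableAt ℝ g (Fin.init y)) :
    pd (Fin.last d) (fun z => g (Fin.init z)) y = 0 := by
  rw [pd_comp_init _ hg, Fin.init_single_last, map_zero]

lemma eventually_comp_init {P : (Fin d → ℝ) → Prop} (h : ∀ᶠ x in 𝓝 (Fin.init y), P x) :
    ∀ᶠ z in 𝓝 y, P (Fin.init z) :=
  (Fin.initCLM d).continuous.continuousAt.eventually h

lemma sum_pd_eq_of_eventuallyEq_comp_init {Φ : Fin (d + 1) → (Fin (d + 1) → ℝ) → ℝ}
    {G : Fin d → (Fin d → ℝ) → ℝ} {H : (Fin d → ℝ) → ℝ}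
    (hΦ : ∀ j, Φ j.castSucc =ᶠ[𝓝 y] fun z => G j (Fin.init z))
    (hG : ∀ j, DifferentiableAt ℝ (G j) (Fin.init y))
    (hΦlast : Φ (Fin.last d) =ᶠ[𝓝 y] fun z => H (Fin.init z))
    (hH : DifferentiableAt ℝ H (Fin.init y)) :
    ∑ i, pd i (Φ i) y = ∑ j, pd j (G j) (Fin.init y) := by
  rw [Fin.sum_univ_castSucc, pd_congr hΦlast, pd_last_comp_init hH, add_zero]
  exact Finset.sum_congr rfl fun j _ => by rw [pd_congr (hΦ j), pd_castSucc_comp_init j (hG j)]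

lemma lap_comp_init (hg : ContDiffAt ℝ 2 g (Fin.init y)) :
    lap (fun z => g (Fin.init z)) y = lap g (Fin.init y) := by
  have hdiff : ∀ᶠ z in 𝓝 y, DifferentiableAt ℝ g (Fin.init z) :=
    eventually_comp_init ((hg.eventually (by simp)).mono fun _ h => h.differentiableAt two_ne_zero)
  refine sum_pd_eq_of_eventuallyEq_comp_init (G := fun j => pd j g) (H := fun _ => 0)
    (fun j => hdiff.mono fun z hz => pd_castSucc_comp_init j hz)
    (fun j => (hg.pd (m := 1) le_rfl).differentiableAt one_ne_zero)
    (hdiff.mono fun z hz => pd_last_comp_init hz) (differentiableAt_const _)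

end LiftAlongInit

section Graph

variable {d : ℕ} {f : (Fin d → ℝ) → ℝ}

noncomputable def graphDefining (f : (Fin d → ℝ) → ℝ) : (Fin (d + 1) → ℝ) → ℝ :=
  fun z => z (Fin.last d) - f (Fin.init z)

/-- The Gram determinant of the parametrization `x ↦ (x, f x)` of the graph of `f`. -/
noncomputable def graphGram (f : (Fin d → ℝ) → ℝ) : (Fin d → ℝ) → ℝ :=
  fun x => 1 + ∑ j, pd j f x ^ 2

lemma graphGram_pos (x : Fin d → ℝ) : 0 < graphGram f x := by
  simp only [graphGram]; positivity

lemma ContDiffAt.graphGram {n m : WithTop ℕ∞} {x : Fin d → ℝ} (hf : ContDiffAt ℝ n f x)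
    (hmn : m + 1 ≤ n) : ContDiffAt ℝ m (graphGram f) x :=
  contDiffAt_const.add (ContDiffAt.sum fun _ _ => (hf.pd hmn).pow 2)

lemma pd_graphGram {x : Fin d → ℝ} (i : Fin d) (hf : ContDiffAt ℝ 2 f x) :
    pd i (graphGram f) x = 2 * ∑ k, pd k f x * pd i (pd k f) x := by
  have hdf : ∀ k, DifferentiableAt ℝ (pd k f) x :=
    fun k => (hf.pd (m := 1) le_rfl).differentiableAt one_ne_zero
  unfold graphGram
  rw [pd_add (v := fun y => ∑ k, pd k f y ^ 2) (differentiableAt_const _)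
      (DifferentiableAt.fun_sum fun k _ => (hdf k).pow 2),
    pd_const, pd_sum (w := fun k y => pd k f y ^ 2) Finset.univ fun k _ => (hdf k).pow 2,
    zero_add, Finset.mul_sum]
  refine Finset.sum_congr rfl fun k _ => ?_
  rw [pd_pow 2 (hdf k)]
  push_cast; ring

lemma pd_log_sqrt_graphGram {x : Fin d → ℝ} (i : Fin d) (hf : ContDiffAt ℝ 2 f x) :
    pd i (fun x => Real.log √(graphGram f x)) x =
      (∑ k, pd k f x * pd i (pd k f) x) / graphGram f x := by
  rw [pd_log_sqrt ((hf.graphGram (m := 1) (by norm_num)).differentiableAt one_ne_zero)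
    (graphGram_pos x), pd_graphGram i hf]
  field_simp

variable {z : Fin (d + 1) → ℝ}

lemma pd_castSucc_graphDefining (j : Fin d) (hf : DifferentiableAt ℝ f (Fin.init z)) :
    pd j.castSucc (graphDefining f) z = -pd j f (Fin.init z) := by
  unfold graphDefining
  rw [pd_sub (differentiableAt_apply _ _) hf.comp_init,
    pd_apply, pd_castSucc_comp_init j hf, Pi.single_apply, if_neg (Fin.castSucc_ne_last j).symm,
    zero_sub]

lemma pd_last_graphDefining (hf : DifferentiableAt ℝ f (Fin.init z)) :
    pd (Fin.last d) (graphDefining f) z = 1 := by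
  unfold graphDefining
  rw [pd_sub (differentiableAt_apply _ _) hf.comp_init,
    pd_apply, pd_last_comp_init hf, Pi.single_eq_same, sub_zero]

lemma sum_sq_pd_graphDefining (hf : DifferentiableAt ℝ f (Fin.init z)) :
    ∑ i, pd i (graphDefining f) z ^ 2 = graphGram f (Fin.init z) := by
  simp only [Fin.sum_univ_castSucc, pd_castSucc_graphDefining _ hf, pd_last_graphDefining hf,
    graphGram, neg_sq, one_pow]
  ring

lemma lap_graphDefining (hf : ContDiffAt ℝ 2 f (Fin.init z)) :
    lap (graphDefining f) z = -lap f (Fin.init z) := by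
  have hdiff : ∀ᶠ w in 𝓝 z, DifferentiableAt ℝ f (Fin.init w) :=
    eventually_comp_init ((hf.eventually (by simp)).mono fun _ h => h.differentiableAt two_ne_zero)
  rw [lap, sum_pd_eq_of_eventuallyEq_comp_init (G := fun j x => -pd j f x) (H := fun _ => 1)
    (fun j => hdiff.mono fun w hw => pd_castSucc_graphDefining j hw)
    (fun j => ((hf.pd (m := 1) le_rfl).differentiableAt one_ne_zero).neg)
    (hdiff.mono fun w hw => pd_last_graphDefining hw) (differentiableAt_const _)]
  simp only [pd_neg, Finset.sum_neg_distrib, lap]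

variable {q : Fin (d + 1) → ℝ}

lemma sum_pd_lap_mul_pd_div_graphDefining (hf : ContDiffAt ℝ 3 f (Fin.init q)) :
    ∑ i, pd i (fun y => lap (graphDefining f) y * pd i (graphDefining f) y /
        ∑ j, pd j (graphDefining f) y ^ 2) q =
      ∑ j, pd j (fun x => lap f x * pd j f x / graphGram f x) (Fin.init q) := by
  have hC2 : ∀ᶠ z in 𝓝 q, ContDiffAt ℝ 2 f (Fin.init z) :=
    eventually_comp_init ((hf.eventually (by simp)).mono fun _ h => h.of_le (by norm_num))
  have hlap : DifferentiableAt ℝ (lap f) (Fin.init q) :=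
    (hf.lap (m := 1) (by norm_num)).differentiableAt one_ne_zero
  have hpd (j : Fin d) : DifferentiableAt ℝ (pd j f) (Fin.init q) :=
    (hf.pd (m := 1) (by norm_num)).differentiableAt one_ne_zero
  have hW : DifferentiableAt ℝ (graphGram f) (Fin.init q) :=
    (hf.graphGram (m := 1) (by norm_num)).differentiableAt one_ne_zero
  have hW0 : graphGram f (Fin.init q) ≠ 0 := (graphGram_pos _).ne'
  refine sum_pd_eq_of_eventuallyEq_comp_init (H := fun x => -lap f x / graphGram f x)
    (fun j => hC2.mono fun z hz => ?_) (fun j => by fun_prop (disch := exact hW0))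
    (hC2.mono fun z hz => ?_) (by fun_prop (disch := exact hW0))
  · have hdf := hz.differentiableAt two_ne_zero
    simp only [lap_graphDefining hz, pd_castSucc_graphDefining j hdf, sum_sq_pd_graphDefining hdf,
      neg_mul_neg]
  · have hdf := hz.differentiableAt two_ne_zero
    simp only [lap_graphDefining hz, pd_last_graphDefining hdf, sum_sq_pd_graphDefining hdf,
      mul_one]

lemma lap_log_sqrt_sum_sq_pd_graphDefining (hf : ContDiffAt ℝ 3 f (Fin.init q)) :
    lap (fun y => Real.log √(∑ j, pd j (graphDefining f) y ^ 2)) q =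
      lap (fun x => Real.log √(graphGram f x)) (Fin.init q) := by
  have hdiff : ∀ᶠ z in 𝓝 q, DifferentiableAt ℝ f (Fin.init z) :=
    eventually_comp_init ((hf.eventually (by simp)).mono fun _ h => h.differentiableAt (by simp))
  rw [lap_congr (v := fun z => Real.log √(graphGram f (Fin.init z)))
    (hdiff.mono fun z hz => by simp only [sum_sq_pd_graphDefining hz])]
  exact lap_comp_init (((hf.graphGram (by norm_num)).sqrt (graphGram_pos _).ne').log
    (Real.sqrt_ne_zero'.2 (graphGram_pos _)))

end Graph

section Monge

variable {f : (Fin 2 → ℝ) → ℝ} {p : Fin 2 → ℝ}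

noncomputable def mongeGaussCurvature (f : (Fin 2 → ℝ) → ℝ) (p : Fin 2 → ℝ) : ℝ :=
  (pd 0 (pd 0 f) p * pd 1 (pd 1 f) p - pd 0 (pd 1 f) p ^ 2) /
    (1 + pd 0 f p ^ 2 + pd 1 f p ^ 2) ^ 2

lemma graphGram_fin_two (x : Fin 2 → ℝ) : graphGram f x = 1 + pd 0 f x ^ 2 + pd 1 f x ^ 2 := by
  simp only [graphGram, Fin.sum_univ_two, add_assoc]

/-- `adj (Hess f) ∇f`. -/
noncomputable def hessAdjGrad (f : (Fin 2 → ℝ) → ℝ) : Fin 2 → (Fin 2 → ℝ) → ℝ :=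
  ![fun x => pd 0 f x * pd 1 (pd 1 f) x - pd 1 f x * pd 0 (pd 1 f) x,
    fun x => pd 1 f x * pd 0 (pd 0 f) x - pd 0 f x * pd 1 (pd 0 f) x]

lemma differentiableAt_hessAdjGrad (j : Fin 2) (hf : ContDiffAt ℝ 3 f p) :
    DifferentiableAt ℝ (hessAdjGrad f j) p := by
  have hd1 (k : Fin 2) : DifferentiableAt ℝ (pd k f) p :=
    (hf.pd (m := 2) (by norm_num)).differentiableAt two_ne_zero
  have hd2 (k l : Fin 2) : DifferentiableAt ℝ (pd k (pd l f)) p :=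
    ((hf.pd (m := 2) (by norm_num)).pd (m := 1) le_rfl).differentiableAt one_ne_zero
  fin_cases j <;> simp only [hessAdjGrad, Fin.zero_eta, Fin.mk_one, Matrix.cons_val_zero,
    Matrix.cons_val_one] <;> fun_prop

/-- The adjugate of the Hessian is divergence free by the symmetry of third derivatives, so
only `tr (adj H · H) = 2 det H` survives. -/
lemma sum_pd_hessAdjGrad (hf : ContDiffAt ℝ 3 f p) :
    ∑ j, pd j (hessAdjGrad f j) p =
      2 * (pd 0 (pd 0 f) p * pd 1 (pd 1 f) p - pd 0 (pd 1 f) p ^ 2) := by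
  have h2 : ContDiffAt ℝ 2 f p := hf.of_le (by norm_num)
  have hpd2 (k : Fin 2) : ContDiffAt ℝ 2 (pd k f) p := hf.pd (by norm_num)
  have hd1 (k : Fin 2) : DifferentiableAt ℝ (pd k f) p := (hpd2 k).differentiableAt two_ne_zero
  have hd2 (k l : Fin 2) : DifferentiableAt ℝ (pd k (pd l f)) p :=
    ((hpd2 l).pd (m := 1) le_rfl).differentiableAt one_ne_zero
  have h011 : pd 0 (pd 1 (pd 1 f)) p = pd 1 (pd 1 (pd 0 f)) p := by
    rw [pd_comm 0 1 (hpd2 1), pd_congr (pd_comm_eventuallyEq 0 1 h2)]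
  have h001 : pd 0 (pd 0 (pd 1 f)) p = pd 1 (pd 0 (pd 0 f)) p := by
    rw [pd_congr (pd_comm_eventuallyEq 0 1 h2), pd_comm 0 1 (hpd2 0)]
  simp only [Fin.sum_univ_two, hessAdjGrad, Matrix.cons_val_zero, Matrix.cons_val_one]
  rw [pd_sub ((hd1 0).fun_mul (hd2 1 1)) ((hd1 1).fun_mul (hd2 0 1)),
    pd_sub ((hd1 1).fun_mul (hd2 0 0)) ((hd1 0).fun_mul (hd2 1 0)),
    pd_mul (hd1 0) (hd2 1 1), pd_mul (hd1 1) (hd2 0 1), pd_mul (hd1 1) (hd2 0 0),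
    pd_mul (hd1 0) (hd2 1 0), h011, h001, pd_comm 1 0 h2]
  ring

lemma sum_pd_lap_mul_pd_div_graphGram_sub_lap_log_sqrt_graphGram (hf : ContDiffAt ℝ 3 f p) :
    ∑ j, pd j (fun x => lap f x * pd j f x / graphGram f x) p -
        lap (fun x => Real.log √(graphGram f x)) p =
      ∑ j, pd j (fun x => hessAdjGrad f j x / graphGram f x) p := by
  have hd1 (k : Fin 2) : DifferentiableAt ℝ (pd k f) p :=
    (hf.pd (m := 2) (by norm_num)).differentiableAt two_ne_zero
  have hd2 (k l : Fin 2) : DifferentiableAt ℝ (pd k (pd l f)) p :=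
    ((hf.pd (m := 2) (by norm_num)).pd (m := 1) le_rfl).differentiableAt one_ne_zero
  have hlapf : DifferentiableAt ℝ (lap f) p :=
    (hf.lap (m := 1) (by norm_num)).differentiableAt one_ne_zero
  have hW : DifferentiableAt ℝ (graphGram f) p :=
    (hf.graphGram (m := 1) (by norm_num)).differentiableAt one_ne_zero
  have hW0 : graphGram f p ≠ 0 := (graphGram_pos p).ne'
  have hlog (j : Fin 2) : pd j (fun x => Real.log √(graphGram f x)) =ᶠ[𝓝 p]
      fun x => (∑ k, pd k f x * pd j (pd k f) x) / graphGram f x :=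
    (hf.eventually (by simp)).mono fun x hx => pd_log_sqrt_graphGram j (hx.of_le (by norm_num))
  have hsplit (j : Fin 2) : (fun x => lap f x * pd j f x / graphGram f x -
      (∑ k, pd k f x * pd j (pd k f) x) / graphGram f x) =
      fun x => hessAdjGrad f j x / graphGram f x := by
    funext x
    fin_cases j <;> simp only [hessAdjGrad, lap, Fin.sum_univ_two, Fin.zero_eta, Fin.mk_one,
      Matrix.cons_val_zero, Matrix.cons_val_one] <;> ring
  rw [lap, ← Finset.sum_sub_distrib]
  refine Finset.sum_congr rfl fun j _ => ?_
  rw [pd_congr (hlog j), ← pd_sub (by fun_prop (disch := exact hW0))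
    (by fun_prop (disch := exact hW0)), hsplit]

theorem two_mul_mongeGaussCurvature_eq (hf : ContDiffAt ℝ 3 f p) :
    2 * mongeGaussCurvature f p =
      ∑ j, pd j (fun x => lap f x * pd j f x / graphGram f x) p -
        lap (fun x => Real.log √(graphGram f x)) p := by
  have h2 : ContDiffAt ℝ 2 f p := hf.of_le (by norm_num)
  have hW : DifferentiableAt ℝ (graphGram f) p :=
    (hf.graphGram (m := 1) (by norm_num)).differentiableAt one_ne_zero
  have hW0 : graphGram f p ≠ 0 := (graphGram_pos p).ne'
  have hadj := sum_pd_hessAdjGrad hf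
  rw [sum_pd_lap_mul_pd_div_graphGram_sub_lap_log_sqrt_graphGram hf, Fin.sum_univ_two,
    pd_div (differentiableAt_hessAdjGrad 0 hf) hW hW0,
    pd_div (differentiableAt_hessAdjGrad 1 hf) hW hW0, pd_graphGram 0 h2, pd_graphGram 1 h2,
    mongeGaussCurvature]
  simp only [Fin.sum_univ_two, hessAdjGrad, Matrix.cons_val_zero, Matrix.cons_val_one,
    pd_comm 1 0 h2] at hadj ⊢
  rw [graphGram_fin_two] at hW0 ⊢
  field_simp
  linear_combination (-(1 + pd 0 f p ^ 2 + pd 1 f p ^ 2)) * hadj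

end Monge

theorem gauss_curvature_graph_general
    (Ω : Set (Fin 2 → ℝ)) (hΩ : IsOpen Ω)
    (f : (Fin 2 → ℝ) → ℝ) (hf : ContDiffOn ℝ 3 f Ω)
    -- ψ(x,y,z) = z − f(x,y) on ℝ³
    (ψ : (Fin 3 → ℝ) → ℝ)
    (hψ : ∀ x : Fin 3 → ℝ, ψ x = x 2 - f (fun i : Fin 2 => x i.castSucc))
    (q : Fin 3 → ℝ) (hq : (fun i : Fin 2 => q i.castSucc) ∈ Ω) :
    2 * ((pd 0 (pd 0 f) (fun i : Fin 2 => q i.castSucc) *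
            pd 1 (pd 1 f) (fun i : Fin 2 => q i.castSucc) -
          (pd 0 (pd 1 f) (fun i : Fin 2 => q i.castSucc)) ^ 2) /
        (1 + (pd 0 f (fun i : Fin 2 => q i.castSucc)) ^ 2 +
            (pd 1 f (fun i : Fin 2 => q i.castSucc)) ^ 2) ^ 2) =
      (∑ i, pd i (fun y =>
          lap ψ y * pd i ψ y / (∑ j, (pd j ψ y) ^ 2)) q) -
      lap (fun y => Real.log (Real.sqrt (∑ j, (pd j ψ y) ^ 2))) q := by
  obtain rfl : ψ = graphDefining f := funext hψ
  have hfq : ContDiffAt ℝ 3 f (Fin.init q) := hf.contDiffAt (hΩ.mem_nhds hq)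
  rw [sum_pd_lap_mul_pd_div_graphDefining hfq, lap_log_sqrt_sum_sq_pd_graphDefining hfq]
  exact two_mul_mongeGaussCurvature_eq hfq

theorem gauss_curvature_graph
    (Ω : Set (Fin 2 → ℝ)) (hΩ : IsOpen Ω)
    (f : (Fin 2 → ℝ) → ℝ) (hf : ContDiffOn ℝ 3 f Ω)
    -- ψ(x,y,z) = z − f(x,y) on ℝ³
    (ψ : (Fin 3 → ℝ) → ℝ)
    (hψ : ∀ x : Fin 3 → ℝ, ψ x = x 2 - f (fun i : Fin 2 => x i.castSucc))
    (q : Fin 3 → ℝ) (hq : (fun i : Fin 2 => q i.castSucc) ∈ Ω)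
    -- q lies on the graph of f
    (hgraph : q 2 = f (fun i : Fin 2 => q i.castSucc)) :
    2 * ((pd 0 (pd 0 f) (fun i : Fin 2 => q i.castSucc) *
            pd 1 (pd 1 f) (fun i : Fin 2 => q i.castSucc) -
          (pd 0 (pd 1 f) (fun i : Fin 2 => q i.castSucc)) ^ 2) /
        (1 + (pd 0 f (fun i : Fin 2 => q i.castSucc)) ^ 2 +
            (pd 1 f (fun i : Fin 2 => q i.castSucc)) ^ 2) ^ 2) =
      (∑ i, pd i (fun y =>
          lap ψ y * pd i ψ y / (∑ j, (pd j ψ y) ^ 2)) q) -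
      lap (fun y => Real.log (Real.sqrt (∑ j, (pd j ψ y) ^ 2))) q :=
  gauss_curvature_graph_general Ω hΩ f hf ψ hψ q hq
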